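/- Let d ≥ 1, let T = {x_1, …, x_n} ⊂ ℝ^d be a finite nonempty set of training points, and set d_x = min_{1≤i≤n} ‖x − x_i‖ for x ∈ ℝ^d. Let R be a finite nonempty index set of polytopes; for each r ∈ R let the kernel center μ_r lie in the convex hull of T and let the bandwidth vector σ_r ∈ ℝ^d satisfy 0 < σ_min ≤ σ_{r,i} ≤ σ_max for all i. Let K ≥ 1 be the number of classes, with priors p_y > 0 summing to 1 over y ∈ {1,…,K}, nonnegative weights w_{ry} with w_y := Σ_{r∈R} w_{ry} > 0 for each class y, a bias constant c > 0, and an arbitrary kernel-selection map r* : ℝ^d → R. Define the class-conditional density estimate f̃_y(x) = w_{r*(x),y} · G(x; μ_{r*(x)}, σ_{r*(x)}) / w_y and the confidence score ĝ_y(x) = (f̃_y(x) + c) p_y / Σ_{k=1}^K (f̃_k(x) + c) p_k. Then for every class y, ĝ_y(x) converges to p_y as d_x → ∞; that is, for every ε > 0 there exists M > 0 such that d_x ≥ M implies |ĝ_y(x) − p_y| < ε. -/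

import Mathlib

open Real Filter Finset

/-- Diagonal Gaussian density on `ℝ^d`:
`G(x; μ, σ) = ∏ i, (2πσᵢ²)^(-1/2) exp(-(xᵢ-μᵢ)²/(2σᵢ²))`. -/
noncomputable def gaussD {d : ℕ} (x μ : EuclideanSpace ℝ (Fin d)) (σ : Fin d → ℝ) : ℝ :=
  ∏ i : Fin d, ((Real.sqrt (2 * Real.pi * (σ i) ^ 2))⁻¹ *
    Real.exp (-((x i - μ i) ^ 2) / (2 * (σ i) ^ 2)))

set_option maxHeartbeats 1600000

/-- Theorem 2 (Asymptotic OOD Convergence): the confidence score `ĝ_y(x)` converges to the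
class prior `p_y` as the distance `d_x` from the training set tends to infinity. -/
theorem asymptotic_ood_convergence
    (d n : ℕ) (hd : 1 ≤ d) (hn : 1 ≤ n)
    (x : Fin n → EuclideanSpace ℝ (Fin d))
    (R : Type*) [Fintype R] [Nonempty R]
    (μ : R → EuclideanSpace ℝ (Fin d))
    (hμ : ∀ r : R, μ r ∈ convexHull ℝ (Set.range x))
    (σ : R → Fin d → ℝ) (σmin σmax : ℝ) (hσmin : 0 < σmin)
    (hσ : ∀ (r : R) (i : Fin d), σmin ≤ σ r i ∧ σ r i ≤ σmax)
    (K : ℕ) (hK : 1 ≤ K)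
    (p : Fin K → ℝ) (hp : ∀ y : Fin K, 0 < p y) (hpsum : ∑ y : Fin K, p y = 1)
    (w : R → Fin K → ℝ) (hw : ∀ (r : R) (y : Fin K), 0 ≤ w r y)
    (hwy : ∀ y : Fin K, 0 < ∑ r : R, w r y)
    (c : ℝ) (hc : 0 < c)
    (rstar : EuclideanSpace ℝ (Fin d) → R) :
    ∀ y : Fin K, ∀ ε > 0, ∃ M > 0, ∀ xx : EuclideanSpace ℝ (Fin d),
      M ≤ Finset.univ.inf' (Finset.univ_nonempty_iff.mpr ⟨⟨0, hn⟩⟩)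
            (fun i : Fin n => ‖xx - x i‖) →
      |(w (rstar xx) y * gaussD xx (μ (rstar xx)) (σ (rstar xx)) / (∑ r : R, w r y) + c) * p y /
          (∑ k : Fin K,
            (w (rstar xx) k * gaussD xx (μ (rstar xx)) (σ (rstar xx)) / (∑ r : R, w r k) + c)
              * p k)
        - p y| < ε := by
  intro y ε hε
  obtain ⟨r0⟩ := ‹Nonempty R›
  have hne : (Finset.univ : Finset R).Nonempty := ⟨r0, Finset.mem_univ r0⟩
  have hKne : (Finset.univ : Finset (Fin K)).Nonempty := ⟨y, Finset.mem_univ y⟩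
  have hσmax : 0 < σmax :=
    lt_of_lt_of_le hσmin (le_trans (hσ r0 ⟨0, hd⟩).1 (hσ r0 ⟨0, hd⟩).2)
  set s : ℝ := 2 * σmax ^ 2 with hs_def
  have hs : 0 < s := by positivity
  set A : ℝ := (Real.sqrt (2 * Real.pi * σmin ^ 2))⁻¹ with hA_def
  have hpi : (0:ℝ) < 2 * Real.pi * σmin ^ 2 := by positivity
  have hA : 0 < A := by
    rw [hA_def]
    exact inv_pos.mpr (Real.sqrt_pos.mpr hpi)
  set C : ℝ := Finset.univ.sup' hne (fun r => ‖μ r - x ⟨0, hn⟩‖) with hC_def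
  set B : ℝ := 1 + Finset.univ.sup' hKne
      (fun k => (Finset.univ.sup' hne fun r => w r k) / (∑ r : R, w r k)) with hB_def
  have hwB : ∀ (r : R) (k : Fin K), w r k / (∑ r' : R, w r' k) ≤ B := by
    intro r k
    have h1 : w r k ≤ Finset.univ.sup' hne fun r' => w r' k :=
      Finset.le_sup' (fun r' => w r' k) (Finset.mem_univ r)
    have h2 : w r k / (∑ r' : R, w r' k) ≤
        (Finset.univ.sup' hne fun r' => w r' k) / (∑ r' : R, w r' k) :=
      (div_le_div_iff_of_pos_right (hwy k)).mpr h1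
    have h3 : (Finset.univ.sup' hne fun r' => w r' k) / (∑ r' : R, w r' k) ≤
        Finset.univ.sup' hKne
          (fun k => (Finset.univ.sup' hne fun r => w r k) / (∑ r : R, w r k)) :=
      Finset.le_sup' (fun k => (Finset.univ.sup' hne fun r => w r k) / (∑ r : R, w r k))
        (Finset.mem_univ k)
    calc w r k / (∑ r' : R, w r' k) ≤ _ := h2
      _ ≤ _ := h3
      _ ≤ B := by rw [hB_def]; linarith
  have hB : 0 < B := by
    have h1 : w r0 y ≤ Finset.univ.sup' hne fun r' => w r' y :=
      Finset.le_sup' (fun r' => w r' y) (Finset.mem_univ r0)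
    have h2 : (0:ℝ) ≤ (Finset.univ.sup' hne fun r' => w r' y) / (∑ r' : R, w r' y) :=
      div_nonneg (le_trans (hw r0 y) h1) (hwy y).le
    have h3 := Finset.le_sup'
      (fun k => (Finset.univ.sup' hne fun r => w r k) / (∑ r : R, w r k)) (Finset.mem_univ y)
    rw [hB_def]; linarith
  -- gaussD is nonnegative
  have gauss_nonneg : ∀ (xx : EuclideanSpace ℝ (Fin d)) (r : R),
      0 ≤ gaussD xx (μ r) (σ r) := by
    intro xx r
    unfold gaussD
    apply Finset.prod_nonneg
    intro i _
    positivity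
  -- upper bound on gaussD
  have gauss_le : ∀ (r : R) (xx : EuclideanSpace ℝ (Fin d)),
      gaussD xx (μ r) (σ r) ≤ A ^ d * Real.exp (-‖xx - μ r‖ ^ 2 / s) := by
    intro r xx
    have hnorm : ‖xx - μ r‖ ^ 2 = ∑ i : Fin d, (xx i - μ r i) ^ 2 := by
      rw [EuclideanSpace.norm_eq, Real.sq_sqrt (by positivity)]
      congr 1
      ext i
      simp [sq_abs]
    calc gaussD xx (μ r) (σ r)
        ≤ ∏ i : Fin d, (A * Real.exp (-((xx i - μ r i) ^ 2) / s)) := by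
          unfold gaussD
          apply Finset.prod_le_prod
          · intro i _; positivity
          · intro i _
            have hσi : 0 < σ r i := lt_of_lt_of_le hσmin (hσ r i).1
            have h1 : (Real.sqrt (2 * Real.pi * (σ r i) ^ 2))⁻¹ ≤ A := by
              rw [hA_def]
              apply inv_anti₀ (Real.sqrt_pos.mpr hpi)
              apply Real.sqrt_le_sqrt
              have : σmin ^ 2 ≤ (σ r i) ^ 2 := by nlinarith [(hσ r i).1]
              nlinarith [Real.pi_pos]
            have h2 : Real.exp (-((xx i - μ r i) ^ 2) / (2 * (σ r i) ^ 2)) ≤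
                Real.exp (-((xx i - μ r i) ^ 2) / s) := by
              apply Real.exp_le_exp.mpr
              rw [neg_div, neg_div, neg_le_neg_iff]
              apply div_le_div_of_nonneg_left (by positivity) (by positivity)
              rw [hs_def]
              nlinarith [(hσ r i).2, hσi]
            exact mul_le_mul h1 h2 (Real.exp_nonneg _) hA.le
      _ = A ^ d * Real.exp (-‖xx - μ r‖ ^ 2 / s) := by
          rw [Finset.prod_mul_distrib, Finset.prod_const, Finset.card_univ, Fintype.card_fin,
            ← Real.exp_sum]
          congr 1
          rw [hnorm]
          rw [← Finset.sum_div, ← Finset.sum_neg_distrib]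
  -- the bound tends to zero
  have htend : Tendsto (fun t : ℝ => A ^ d * Real.exp (-(t - C) ^ 2 / s)) atTop (nhds 0) := by
    have h1 : Tendsto (fun t : ℝ => (t - C) ^ 2) atTop atTop :=
      (tendsto_pow_atTop (by norm_num : (2:ℕ) ≠ 0)).comp
        (tendsto_atTop_add_const_right atTop (-C) tendsto_id)
    have h2 : Tendsto (fun t : ℝ => -(t - C) ^ 2 / s) atTop atBot :=
      (tendsto_neg_atBot_iff.mpr h1).atBot_div_const hs
    have h3 : Tendsto (fun t : ℝ => Real.exp (-(t - C) ^ 2 / s)) atTop (nhds 0) :=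
      Real.tendsto_exp_atBot.comp h2
    simpa using h3.const_mul (A ^ d)
  have hδ : 0 < ε * c / (2 * B) := by positivity
  obtain ⟨M, hM1, hM2⟩ : ∃ M : ℝ,
      A ^ d * Real.exp (-(M - C) ^ 2 / s) < ε * c / (2 * B) ∧ max 1 C ≤ M :=
    ((htend.eventually_lt_const hδ).and (eventually_ge_atTop (max 1 C))).exists
  have hM0 : 0 < M := lt_of_lt_of_le one_pos (le_trans (le_max_left 1 C) hM2)
  have hCM : C ≤ M := le_trans (le_max_right 1 C) hM2
  refine ⟨M, hM0, ?_⟩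
  intro xx hxx
  set r := rstar xx with hr_def
  set G : ℝ := gaussD xx (μ r) (σ r) with hG_def
  have hG0 : 0 ≤ G := gauss_nonneg xx r
  -- distance bound
  have hdist : M - C ≤ ‖xx - μ r‖ := by
    have h1 : Finset.univ.inf' (Finset.univ_nonempty_iff.mpr ⟨⟨0, hn⟩⟩)
        (fun i : Fin n => ‖xx - x i‖) ≤ ‖xx - x ⟨0, hn⟩‖ :=
      Finset.inf'_le (fun i : Fin n => ‖xx - x i‖) (Finset.mem_univ _)
    have h2 : ‖xx - x ⟨0, hn⟩‖ ≤ ‖xx - μ r‖ + ‖μ r - x ⟨0, hn⟩‖ := by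
      have := norm_add_le (xx - μ r) (μ r - x ⟨0, hn⟩)
      simpa using this
    have h3 : ‖μ r - x ⟨0, hn⟩‖ ≤ C := by
      rw [hC_def]
      exact Finset.le_sup' (fun r => ‖μ r - x ⟨0, hn⟩‖) (Finset.mem_univ r)
    linarith
  have hGlt : G < ε * c / (2 * B) := by
    have h1 : G ≤ A ^ d * Real.exp (-‖xx - μ r‖ ^ 2 / s) := gauss_le r xx
    have h2 : (M - C) ^ 2 ≤ ‖xx - μ r‖ ^ 2 := by
      apply pow_le_pow_left₀ (by linarith) hdist
    have h3 : Real.exp (-‖xx - μ r‖ ^ 2 / s) ≤ Real.exp (-(M - C) ^ 2 / s) := by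
      apply Real.exp_le_exp.mpr
      rw [div_le_div_iff₀ hs hs]
      nlinarith
    calc G ≤ A ^ d * Real.exp (-‖xx - μ r‖ ^ 2 / s) := h1
      _ ≤ A ^ d * Real.exp (-(M - C) ^ 2 / s) := by
          apply mul_le_mul_of_nonneg_left h3 (by positivity)
      _ < ε * c / (2 * B) := hM1
  -- final arithmetic
  set D : ℝ := ∑ k : Fin K, (w r k * G / (∑ r' : R, w r' k) + c) * p k with hD_def
  set N : ℝ := w r y * G / (∑ r' : R, w r' y) with hN_def
  have hqB : ∀ k : Fin K, w r k * G / (∑ r' : R, w r' k) ≤ B * G := by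
    intro k
    have hqe : w r k * G / (∑ r' : R, w r' k) = (w r k / (∑ r' : R, w r' k)) * G := by ring
    rw [hqe]
    exact mul_le_mul_of_nonneg_right (hwB r k) hG0
  have hq0 : ∀ k : Fin K, 0 ≤ w r k * G / (∑ r' : R, w r' k) := fun k =>
    div_nonneg (mul_nonneg (hw r k) hG0) (hwy k).le
  set S : ℝ := ∑ k : Fin K, (w r k * G / (∑ r' : R, w r' k)) * p k with hS_def
  have hDeq : D = S + c := by
    rw [hD_def, hS_def,
      show (∑ k : Fin K, (w r k * G / (∑ r' : R, w r' k) + c) * p k)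
          = (∑ k : Fin K, (w r k * G / (∑ r' : R, w r' k)) * p k) + c * ∑ k : Fin K, p k by
        rw [Finset.mul_sum, ← Finset.sum_add_distrib]
        exact Finset.sum_congr rfl fun k _ => by ring,
      hpsum]
    ring
  have hN0 : 0 ≤ N := hq0 y
  have hNB : N ≤ B * G := hqB y
  have hS0 : 0 ≤ S := Finset.sum_nonneg fun k _ => mul_nonneg (hq0 k) (hp k).le
  have hSB : S ≤ B * G := by
    calc S ≤ ∑ k : Fin K, (B * G) * p k :=
          Finset.sum_le_sum fun k _ => mul_le_mul_of_nonneg_right (hqB k) (hp k).le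
      _ = B * G := by rw [← Finset.mul_sum, hpsum, mul_one]
  have hDc : c ≤ D := by rw [hDeq]; linarith
  have hD0 : 0 < D := lt_of_lt_of_le hc hDc
  have hpy1 : p y ≤ 1 := by
    rw [← hpsum]
    exact Finset.single_le_sum (fun k _ => (hp k).le) (Finset.mem_univ y)
  clear_value A C B s G N D S
  have key : (N + c) * p y / D - p y = p y * (N - S) / D := by
    rw [div_sub' hD0.ne', hDeq]
    ring_nf
  rw [key, abs_div, abs_of_pos hD0, abs_mul, abs_of_pos (hp y)]
  have habs : |N - S| ≤ B * G := by
    rw [abs_sub_le_iff]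
    constructor <;> linarith
  calc p y * |N - S| / D ≤ (B * G) / c := by
        apply div_le_div₀ (by positivity) ?_ hc hDc
        calc p y * |N - S| ≤ 1 * (B * G) :=
              mul_le_mul hpy1 habs (abs_nonneg _) (by norm_num)
          _ = B * G := one_mul _
    _ < ε := by
        rw [div_lt_iff₀ hc]
        have h1 : B * G < B * (ε * c / (2 * B)) := mul_lt_mul_of_pos_left hGlt hB
        have h2 : B * (ε * c / (2 * B)) = ε * c / 2 := by
          field_simp
        nlinarith
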